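/- Let G be a finite graph. If H is a minimal triangulation of G, then Δ(H) is a maximal pairwise-parallel set of minimal separators of G and H = G_{Δ(H)}. Conversely, if Φ is any maximal pairwise-parallel set of minimal separators of G, then G_Φ is a minimal triangulation of G and Δ(G_Φ) = Φ. -/

import Mathlib

open scoped NNReal

namespace PMCPP

variable {V : Type} {X : Type}

/-- A graph is chordal if every cycle on four or more vertices has a chord:
for every injective cyclic sequence of `n ≥ 4` vertices with consecutive
vertices adjacent, some pair of non-consecutive vertices of the cycle is adjacent. -/
def IsChordal (G : SimpleGraph V) : Prop :=
  ∀ n : ℕ, 4 ≤ n → ∀ f : ZMod n → V, Function.Injective f →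
    (∀ i, G.Adj (f i) (f (i + 1))) →
    ∃ i j : ZMod n, j ≠ i + 1 ∧ i ≠ j + 1 ∧ G.Adj (f i) (f j)

/-- `H` is a triangulation of `G`: a chordal supergraph on the same vertex set. -/
def IsTriangulation (G H : SimpleGraph V) : Prop := IsChordal H ∧ G ≤ H

/-- The fill edges of a triangulation `H` of `G`. -/
def fillEdges (G H : SimpleGraph V) : Set (Sym2 V) := H.edgeSet \ G.edgeSet

/-- `H` is a minimal triangulation of `G`: no graph obtained from `G` by adding a
proper subset of the fill edges of `H` is a triangulation of `G`. -/
def IsMinimalTriangulation (G H : SimpleGraph V) : Prop :=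
  IsTriangulation G H ∧ ∀ H' : SimpleGraph V, IsTriangulation G H' → H' ≤ H → H' = H

/-- `pf G U`: the potential fill edges of `U`, i.e. pairs of distinct vertices
of `U` that are not edges of `G`. -/
def pf (G : SimpleGraph V) (U : Set V) : Set (Sym2 V) :=
  {e : Sym2 V | ¬e.IsDiag ∧ e ∉ G.edgeSet ∧ ∀ v ∈ e, v ∈ U}

/-- `F(H)`: total weight of the fill edges of the triangulation `H` of `G`
under the fill weight `F`. -/
noncomputable def fillSum (G H : SimpleGraph V) (F : Sym2 V → ℝ≥0) : ℝ≥0 :=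
  ∑ᶠ e ∈ fillEdges G H, F e

/-- `fill_F(U)`: sum of `F` over the potential fill edges of `U`. -/
noncomputable def fillF (G : SimpleGraph V) (F : Sym2 V → ℝ≥0) (U : Set V) : ℝ≥0 :=
  ∑ᶠ e ∈ pf G U, F e

/-- `mfi_F(G)`: the minimum weight of a triangulation of `G`. -/
noncomputable def mfi (G : SimpleGraph V) (F : Sym2 V → ℝ≥0) : ℝ≥0 :=
  sInf {x : ℝ≥0 | ∃ H : SimpleGraph V, IsTriangulation G H ∧ x = fillSum G H F}

/-- `H` is an `F`-minimum triangulation of `G`. -/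
def IsFMinTriangulation (G H : SimpleGraph V) (F : Sym2 V → ℝ≥0) : Prop :=
  IsTriangulation G H ∧ ∀ H' : SimpleGraph V, IsTriangulation G H' →
    fillSum G H F ≤ fillSum G H' F

/-- `H` is an `F`-minimum minimal triangulation of `G`. -/
def IsFMinMinimalTriangulation (G H : SimpleGraph V) (F : Sym2 V → ℝ≥0) : Prop :=
  IsFMinTriangulation G H F ∧ IsMinimalTriangulation G H

/-- There is a walk from `x` to `y` in `G` avoiding `S`. -/
def AvoidReach (G : SimpleGraph V) (S : Set V) (x y : V) : Prop :=
  ∃ p : G.Walk x y, ∀ v ∈ p.support, v ∉ S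

/-- `S` is an `xy`-separator of `G`. -/
def IsSeparator (G : SimpleGraph V) (S : Set V) (x y : V) : Prop :=
  x ∉ S ∧ y ∉ S ∧ G.Reachable x y ∧ ¬AvoidReach G S x y

/-- `S` is a minimal separator of `G`: a minimal `xy`-separator for some `x`, `y`. -/
def IsMinSeparator (G : SimpleGraph V) (S : Set V) : Prop :=
  ∃ x y : V, IsSeparator G S x y ∧ ∀ S' ⊂ S, ¬IsSeparator G S' x y

/-- `Δ(G)`: the set of minimal separators of `G`. -/
def minSeps (G : SimpleGraph V) : Set (Set V) := {S | IsMinSeparator G S}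

/-- `C` is a connected component of `G − S`: a maximal `S`-avoiding-connected
set of vertices disjoint from `S`. -/
def IsCompOf (G : SimpleGraph V) (S C : Set V) : Prop :=
  C.Nonempty ∧ Disjoint C S ∧ (∀ x ∈ C, ∀ y ∈ C, AvoidReach G S x y) ∧
    ∀ C' : Set V, C ⊆ C' → Disjoint C' S →
      (∀ x ∈ C', ∀ y ∈ C', AvoidReach G S x y) → C' = C

/-- `S'` is parallel to `S`: `S'` meets at most one connected component of `G − S`. -/
def Parallel (G : SimpleGraph V) (S S' : Set V) : Prop :=
  {C : Set V | IsCompOf G S C ∧ (C ∩ S').Nonempty}.Subsingleton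

/-- `Φ` is a maximal pairwise-parallel set of minimal separators of `G`. -/
def MaxPairwiseParallel (G : SimpleGraph V) (Φ : Set (Set V)) : Prop :=
  Φ ⊆ minSeps G ∧ Φ.Pairwise (Parallel G) ∧
    ∀ Ψ : Set (Set V), Ψ ⊆ minSeps G → Ψ.Pairwise (Parallel G) → Φ ⊆ Ψ → Ψ = Φ

/-- `G_Φ`: the graph obtained from `G` by saturating every separator in `Φ`. -/
def saturate (G : SimpleGraph V) (Φ : Set (Set V)) : SimpleGraph V where
  Adj u v := u ≠ v ∧ (G.Adj u v ∨ ∃ S ∈ Φ, u ∈ S ∧ v ∈ S)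
  symm := by
    constructor
    rintro u v ⟨h0, h⟩
    refine ⟨h0.symm, ?_⟩
    rcases h with h | ⟨S, hS, hu, hv⟩
    · exact Or.inl h.symm
    · exact Or.inr ⟨S, hS, hv, hu⟩
  loopless := ⟨fun u h => h.1 rfl⟩

/-- `N(C)`: the vertices outside `C` having a neighbor in `C`. -/
def neighborsOf (G : SimpleGraph V) (C : Set V) : Set V :=
  {v | v ∉ C ∧ ∃ u ∈ C, G.Adj u v}

/-- `(S, C)` is a block of `G`. -/
def IsBlock (G : SimpleGraph V) (S C : Set V) : Prop :=
  S ∈ minSeps G ∧ IsCompOf G S C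

/-- `(S, C)` is a full block of `G`: `N(C) = S`. -/
def IsFullBlock (G : SimpleGraph V) (S C : Set V) : Prop :=
  IsBlock G S C ∧ neighborsOf G C = S

/-- The realization `R(S,C)`: the graph on the vertices `S ∪ C` (realized here as
a graph on `V` all of whose edges lie inside `S ∪ C`) whose edges are the edges of
`G` inside `S ∪ C` together with all pairs of distinct vertices of `S`. -/
def realization (G : SimpleGraph V) (S C : Set V) : SimpleGraph V where
  Adj u v := u ≠ v ∧ u ∈ S ∪ C ∧ v ∈ S ∪ C ∧ (G.Adj u v ∨ (u ∈ S ∧ v ∈ S))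
  symm := by
    constructor
    rintro u v ⟨h0, h1, h2, h3⟩
    refine ⟨h0.symm, h2, h1, ?_⟩
    rcases h3 with h | ⟨ha, hb⟩
    · exact Or.inl h.symm
    · exact Or.inr ⟨hb, ha⟩
  loopless := ⟨fun u h => h.1 rfl⟩

/-- `K` is a maximal clique of `H`. -/
def IsMaximalClique (H : SimpleGraph V) (K : Set V) : Prop :=
  H.IsClique K ∧ ∀ K' : Set V, H.IsClique K' → K ⊆ K' → K' = K

/-- `K` is a potential maximal clique of `G`: a maximal clique of some
minimal triangulation of `G`. -/
def IsPMC (G : SimpleGraph V) (K : Set V) : Prop :=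
  ∃ H : SimpleGraph V, IsMinimalTriangulation G H ∧ IsMaximalClique H K

/-- The graph obtained from `G` by adding the set of edges `E'`. -/
def addEdges (G : SimpleGraph V) (E' : Set (Sym2 V)) : SimpleGraph V :=
  G ⊔ SimpleGraph.fromEdgeSet E'

/-- A character on `X`: a partition of a subset of `X`, i.e. a collection of
nonempty pairwise disjoint subsets (cells) of `X`. -/
def IsCharacter (χ : Set (Set X)) : Prop :=
  (∀ A ∈ χ, A.Nonempty) ∧ χ.PairwiseDisjoint id

/-- Vertices of the partition intersection graph of `C`:
pairs `(A, χ)` with `χ ∈ C` and `A` a cell of `χ`. -/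
def PigV (C : Set (Set (Set X))) : Type _ :=
  {p : Set X × Set (Set X) // p.2 ∈ C ∧ p.1 ∈ p.2}

/-- The partition intersection graph `pig C`: `(A, χ)` and `(A', χ')` are adjacent
iff they are distinct and `A ∩ A' ≠ ∅`. -/
def pig (C : Set (Set (Set X))) : SimpleGraph (PigV C) where
  Adj p q := p ≠ q ∧ (p.val.1 ∩ q.val.1).Nonempty
  symm := by
    constructor
    rintro p q ⟨h0, h⟩
    exact ⟨h0.symm, by rwa [Set.inter_comm]⟩
  loopless := ⟨fun p h => h.1 rfl⟩

/-- A triangulation `H` of `pig C` is proper if no fill edge joins a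
monochromatic pair (two vertices with the same character). -/
def IsProper (C : Set (Set (Set X))) (H : SimpleGraph (PigV C)) : Prop :=
  ∀ p q : PigV C, H.Adj p q → ¬(pig C).Adj p q → p.val.2 ≠ q.val.2

/-- The displayed characters of a triangulation `H` of `pig C`: the characters
of `C` broken by no fill edge of `H`. -/
def displayedChars (C : Set (Set (Set X))) (H : SimpleGraph (PigV C)) :
    Set (Set (Set X)) :=
  {χ | χ ∈ C ∧ ∀ p q : PigV C, H.Adj p q → ¬(pig C).Adj p q →
      ¬(p.val.2 = χ ∧ q.val.2 = χ)}

open Classical in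
/-- The fill weight `F_w` on `pig C` induced by a character weight `w`:
`w χ` on monochromatic pairs with shared character `χ`, and `0` otherwise. -/
noncomputable def wWeight (C : Set (Set (Set X))) (w : Set (Set X) → ℝ≥0) :
    Sym2 (PigV C) → ℝ≥0 :=
  Sym2.lift ⟨fun p q => if p.val.2 = q.val.2 then w p.val.2 else 0, by
    intro p q
    dsimp only
    by_cases h : p.val.2 = q.val.2
    · rw [if_pos h, if_pos h.symm, h]
    · rw [if_neg h, if_neg (fun h' => h h'.symm)]⟩

/-- The indicator fill weight `F_C` on `pig C`:
`1` on monochromatic pairs and `0` otherwise. -/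
noncomputable def indWeight (C : Set (Set (Set X))) : Sym2 (PigV C) → ℝ≥0 :=
  wWeight C fun _ => 1

/-- `w(C')`: total weight of a set of characters. -/
noncomputable def wsum (w : Set (Set X) → ℝ≥0) (C' : Set (Set (Set X))) : ℝ≥0 :=
  ∑ᶠ χ ∈ C', w χ

/-- An `X`-tree: a finite tree `T` together with `φ : X → V(T)` such that every
node of degree at most two is in the image of `φ`. -/
structure XTree (X : Type) where
  V : Type
  finV : Finite V
  T : SimpleGraph V
  isTree : T.IsTree
  φ : X → V
  lowDegreeLabeled : ∀ v : V, (T.neighborSet v).ncard ≤ 2 → v ∈ Set.range φ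

/-- The vertex set of the minimal subtree of `T` connecting `φ(A)`:
the union of the (unique) paths between labels of elements of `A`. -/
def subtreeVerts {W : Type} (T : SimpleGraph W) (φ : X → W) (A : Set X) : Set W :=
  {v | ∃ a ∈ A, ∃ b ∈ A, ∃ p : T.Path (φ a) (φ b), v ∈ p.val.support}

/-- `(T, φ)` displays the character `χ`: for distinct cells `A`, `A'` of `χ` the
subtrees `T(A)` and `T(A')` share no node. -/
def DisplaysIn {W : Type} (T : SimpleGraph W) (φ : X → W) (χ : Set (Set X)) : Prop :=
  ∀ A ∈ χ, ∀ A' ∈ χ, A ≠ A' → subtreeVerts T φ A ∩ subtreeVerts T φ A' = ∅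

/-- The `X`-tree `t` displays the character `χ`. -/
def Displays (t : XTree X) (χ : Set (Set X)) : Prop := DisplaysIn t.T t.φ χ

/-- `t` is a perfect phylogeny for `C`: it displays every character of `C`. -/
def IsPerfectPhylogeny (C : Set (Set (Set X))) (t : XTree X) : Prop :=
  ∀ χ ∈ C, Displays t χ

/-- `C` is compatible: some `X`-tree displays every character in `C`. -/
def Compatible (C : Set (Set (Set X))) : Prop := ∃ t : XTree X, IsPerfectPhylogeny C t

/-- Isomorphism of `X`-trees: a graph isomorphism carrying one labeling to the other. -/
def XTreeIso (t t' : XTree X) : Prop :=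
  ∃ ψ : t.T ≃g t'.T, ∀ x : X, ψ (t.φ x) = t'.φ x

/-- `t` is ternary: every internal node (degree at least two) has degree three. -/
def Ternary (t : XTree X) : Prop :=
  ∀ v : t.V, 2 ≤ (t.T.neighborSet v).ncard → (t.T.neighborSet v).ncard = 3

/-- The graph obtained from `T` by contracting the edge `uv` (merging `v` into `u`). -/
def contractGraph {W : Type} (T : SimpleGraph W) (u v : W) :
    SimpleGraph {x : W // x ≠ v} where
  Adj a b := a ≠ b ∧
    (T.Adj a.val b.val ∨ (a.val = u ∧ T.Adj v b.val) ∨ (b.val = u ∧ T.Adj a.val v))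
  symm := by
    constructor
    rintro a b ⟨h0, h⟩
    refine ⟨h0.symm, ?_⟩
    rcases h with h | ⟨h1, h2⟩ | ⟨h1, h2⟩
    · exact Or.inl h.symm
    · exact Or.inr (Or.inr ⟨h1, h2.symm⟩)
    · exact Or.inr (Or.inl ⟨h1, h2.symm⟩)
  loopless := ⟨fun a h => h.1 rfl⟩

open Classical in
/-- The labeling map after contracting the edge `uv` (merging `v` into `u`). -/
noncomputable def contractMap {W : Type} (φ : X → W) (u v : W) (huv : u ≠ v) :
    X → {x : W // x ≠ v} :=
  fun x => if h : φ x = v then ⟨u, huv⟩ else ⟨φ x, h⟩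

/-- The edge `uv` of the `X`-tree `t` is distinguished by `χ`: contracting `uv`
results in an `X`-tree that does not display `χ`. -/
def EdgeDistinguishedBy (t : XTree X) (u v : t.V) (h : t.T.Adj u v)
    (χ : Set (Set X)) : Prop :=
  ¬DisplaysIn (contractGraph t.T u v) (contractMap t.φ u v h.ne) χ

/-- `t` is distinguished by `C`: each edge of `t` is distinguished by some
character of `C`. -/
def DistinguishedBy (C : Set (Set (Set X))) (t : XTree X) : Prop :=
  ∀ u v : t.V, ∀ h : t.T.Adj u v, ∃ χ ∈ C, EdgeDistinguishedBy t u v h χ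

/-- `Δ_min^F(G)`: the minimal separators of `G` that are minimal separators of
some `F`-minimum minimal triangulation of `G`. -/
def minFillSeps (G : SimpleGraph V) (F : Sym2 V → ℝ≥0) : Set (Set V) :=
  {S | ∃ H : SimpleGraph V, IsFMinMinimalTriangulation G H F ∧ S ∈ minSeps H}

/-!
Everything rests on Dirac's characterisation: a graph is chordal iff all its minimal separators
are cliques. Deleting from a chordal graph `H` all edges between `B` and `Y` keeps it chordal
when the remaining edges leaving `B` end in a clique `S`; for a minimal triangulation `H` of `G`
this forces `H - S` and `G - S` to have the same components, with the same neighbourhoods, for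
every clique `S` of `H`. So the minimal separators of `H` are minimal separators of `G`, pairwise
parallel since each is a clique of `H`, and each fill edge, being the only chord of a square of
`H`, lies in one of them. Conversely, saturating separators parallel to `S` does not change the
components of `G - S`, and saturating a minimal separator creates no new minimal separators.
Hence `Δ(G_Φ) = Φ`, so `G_Φ` is chordal, and in a triangulation between `G` and `G_Φ` every
`T ∈ Φ` is still a minimal separator, hence a clique.
-/

section Separators

variable {G G' : SimpleGraph V} {S T C C' D : Set V} {x y z : V}

lemma AvoidReach.notMem_left (h : AvoidReach G S x y) : x ∉ S :=
  h.elim fun p hp => hp x p.start_mem_support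

lemma AvoidReach.notMem_right (h : AvoidReach G S x y) : y ∉ S :=
  h.elim fun p hp => hp y p.end_mem_support

lemma AvoidReach.refl (hx : x ∉ S) : AvoidReach G S x x :=
  ⟨.nil, by simpa using hx⟩

lemma AvoidReach.symm (h : AvoidReach G S x y) : AvoidReach G S y x :=
  h.elim fun p hp => ⟨p.reverse, by simpa using hp⟩

lemma AvoidReach.trans (h : AvoidReach G S x y) (h' : AvoidReach G S y z) :
    AvoidReach G S x z := by
  obtain ⟨p, hp⟩ := h
  obtain ⟨q, hq⟩ := h'
  exact ⟨p.append q, fun v hv => (p.mem_support_append_iff q).1 hv |>.elim (hp v) (hq v)⟩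

lemma avoidReach_of_adj (h : G.Adj x y) (hx : x ∉ S) (hy : y ∉ S) : AvoidReach G S x y :=
  ⟨.cons h .nil, by simp [hx, hy]⟩

lemma AvoidReach.mono (hle : G ≤ G') (h : AvoidReach G S x y) : AvoidReach G' S x y :=
  h.elim fun p hp => ⟨p.mapLe hle, by simpa using hp⟩

lemma AvoidReach.anti (hTS : T ⊆ S) (h : AvoidReach G S x y) : AvoidReach G T x y :=
  h.elim fun p hp => ⟨p, fun v hv hvT => hp v hv (hTS hvT)⟩

lemma AvoidReach.reachable (h : AvoidReach G S x y) : G.Reachable x y :=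
  h.elim fun p _ => ⟨p⟩

lemma AvoidReach.mem_of_closed (hD : ∀ a ∈ D, ∀ b ∉ S, G.Adj a b → b ∈ D) (hx : x ∈ D)
    (h : AvoidReach G S x y) : y ∈ D := by
  obtain ⟨p, hp⟩ := h
  induction p with
  | nil => exact hx
  | cons hadj q ih =>
    exact ih (hD _ hx _ (hp _ (by simp)) hadj) fun v hv => hp v (by simp [hv])

lemma avoidReach_of_chain {d : ℕ} {w : ℕ → V} (hw : ∀ t < d, G.Adj (w t) (w (t + 1)))
    (hS : ∀ t ≤ d, w t ∉ S) : AvoidReach G S (w 0) (w d) := by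
  induction d with
  | zero => exact .refl (hS 0 le_rfl)
  | succ d ih =>
    exact (ih (fun t ht => hw t (by omega)) fun t ht => hS t (by omega)).trans
      (avoidReach_of_adj (hw d (by omega)) (hS d (by omega)) (hS _ le_rfl))

lemma AvoidReach.exists_seq {x y : V} (h : AvoidReach G S x y) :
    ∃ (d : ℕ) (w : ℕ → V), w 0 = x ∧ w d = y ∧
    (∀ t < d, G.Adj (w t) (w (t + 1))) ∧ ∀ t ≤ d, AvoidReach G S x (w t) := by
  obtain ⟨p, hp⟩ := h
  refine ⟨p.length, p.getVert, p.getVert_zero, p.getVert_length,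
    fun t ht => p.adj_getVert_succ ht, fun t ht => ?_⟩
  simpa only [p.getVert_zero] using avoidReach_of_chain (d := t) (w := p.getVert)
    (fun s hs => p.adj_getVert_succ (by omega)) fun s _ => hp _ (p.getVert_mem_support s)

def compOf (G : SimpleGraph V) (S : Set V) (x : V) : Set V := {y | AvoidReach G S x y}

lemma mem_compOf_self (hx : x ∉ S) : x ∈ compOf G S x := AvoidReach.refl hx

lemma isCompOf_compOf (hx : x ∉ S) : IsCompOf G S (compOf G S x) :=
  ⟨⟨x, mem_compOf_self hx⟩, Set.disjoint_left.2 fun _ hy => AvoidReach.notMem_right hy,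
    fun _ ha _ hb => ha.symm.trans hb,
    fun _ hsub _ hconn => (hsub.antisymm fun _ hv => hconn x (hsub (mem_compOf_self hx)) _ hv).symm⟩

namespace IsCompOf

lemma notMem (hC : IsCompOf G S C) (hx : x ∈ C) : x ∉ S := Set.disjoint_left.1 hC.2.1 hx

lemma eq_compOf (hC : IsCompOf G S C) (hx : x ∈ C) : C = compOf G S x :=
  (hC.2.2.2 _ (fun _ hy => hC.2.2.1 x hx _ hy) (isCompOf_compOf (hC.notMem hx)).2.1
    (isCompOf_compOf (hC.notMem hx)).2.2.1).symm

lemma mem_of_avoidReach (hC : IsCompOf G S C) (hx : x ∈ C) (h : AvoidReach G S x y) : y ∈ C := by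
  rw [hC.eq_compOf hx]
  exact h

lemma adj_mem (hC : IsCompOf G S C) (hx : x ∈ C) (hadj : G.Adj x y) (hy : y ∉ S) : y ∈ C :=
  hC.mem_of_avoidReach hx (avoidReach_of_adj hadj (hC.notMem hx) hy)

lemma eq_of_mem (hC : IsCompOf G S C) (hC' : IsCompOf G S C') (hx : x ∈ C) (hx' : x ∈ C') :
    C = C' := by
  rw [hC.eq_compOf hx, hC'.eq_compOf hx']

lemma neighborsOf_subset (hC : IsCompOf G S C) : neighborsOf G C ⊆ S :=
  fun _ ⟨hvC, _, hu, huv⟩ => by_contra fun hv => hvC (hC.adj_mem hu huv hv)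

lemma avoidReach_of_disjoint (hC : IsCompOf G S C) (hCT : Disjoint C T) (hx : x ∈ C)
    (hy : y ∈ C) : AvoidReach G T x y := by
  have hclosed : ∀ a ∈ {v | v ∈ C ∧ AvoidReach G T x v}, ∀ b ∉ S, G.Adj a b →
      b ∈ {v | v ∈ C ∧ AvoidReach G T x v} := by
    rintro a ⟨ha, hxa⟩ b hb hab
    have hbC := hC.adj_mem ha hab hb
    exact ⟨hbC, hxa.trans (avoidReach_of_adj hab (Set.disjoint_left.1 hCT ha)
      (Set.disjoint_left.1 hCT hbC))⟩
  exact (AvoidReach.mem_of_closed hclosed ⟨hx, .refl (Set.disjoint_left.1 hCT hx)⟩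
    (hC.2.2.1 x hx y hy)).2

end IsCompOf

def IsFullComp (G : SimpleGraph V) (S C : Set V) : Prop :=
  IsCompOf G S C ∧ neighborsOf G C = S

lemma IsSeparator.symm (h : IsSeparator G S x y) : IsSeparator G S y x :=
  ⟨h.2.1, h.1, h.2.2.1.symm, fun h' => h.2.2.2 h'.symm⟩

lemma IsSeparator.mem_of_adj (h : IsSeparator G S x y) (hxz : G.Adj x z) (hzy : G.Adj z y) :
    z ∈ S := by_contra fun hz =>
  h.2.2.2 ((avoidReach_of_adj hxz h.1 hz).trans (avoidReach_of_adj hzy hz h.2.1))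

lemma isSeparator_compl_pair (hxy : x ≠ y) (hnadj : ¬G.Adj x y) (hr : G.Reachable x y) :
    IsSeparator G {x, y}ᶜ x y := by
  refine ⟨by simp, by simp, hr, ?_⟩
  rintro ⟨p, hp⟩
  cases p with
  | nil => exact hxy rfl
  | cons h q =>
    have hv := hp _ (List.mem_cons_of_mem _ q.start_mem_support)
    simp only [Set.mem_compl_iff, Set.mem_insert_iff, Set.mem_singleton_iff, not_not] at hv
    rcases hv with rfl | rfl
    exacts [h.ne rfl, hnadj h]

lemma neighborsOf_compOf_of_minimal (hsep : IsSeparator G S x y)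
    (hmin : ∀ S' ⊂ S, ¬IsSeparator G S' x y) : neighborsOf G (compOf G S x) = S := by
  refine (isCompOf_compOf hsep.1).neighborsOf_subset.antisymm fun s hs => ?_
  by_contra hN
  have hreach : AvoidReach G (S \ {s}) x y := by
    by_contra h
    exact hmin _ (Set.sdiff_singleton_ssubset.2 hs)
      ⟨fun hx => hsep.1 hx.1, fun hy => hsep.2.1 hy.1, hsep.2.2.1, h⟩
  refine hsep.2.2.2 (AvoidReach.mem_of_closed (D := compOf G S x) (fun a ha b hb hab => ?_)
    (mem_compOf_self hsep.1) hreach)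
  have hbs : b ≠ s := by
    rintro rfl
    exact hN ⟨fun hsC => hsC.notMem_right hs, a, ha, hab⟩
  exact AvoidReach.trans ha (avoidReach_of_adj hab ha.notMem_right fun hbS => hb ⟨hbS, hbs⟩)

theorem isMinSeparator_iff : IsMinSeparator G S ↔
    S.Nonempty ∧ ∃ C₁ C₂, C₁ ≠ C₂ ∧ IsFullComp G S C₁ ∧ IsFullComp G S C₂ := by
  constructor
  · rintro ⟨x, y, hsep, hmin⟩
    refine ⟨?_, compOf G S x, compOf G S y, fun h => hsep.2.2.2 ?_,
      ⟨isCompOf_compOf hsep.1, neighborsOf_compOf_of_minimal hsep hmin⟩,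
      ⟨isCompOf_compOf hsep.2.1,
        neighborsOf_compOf_of_minimal hsep.symm fun S' h h' => hmin S' h h'.symm⟩⟩
    · rw [Set.nonempty_iff_ne_empty]
      rintro rfl
      obtain ⟨p⟩ := hsep.2.2.1
      exact hsep.2.2.2 ⟨p, fun v _ => Set.notMem_empty v⟩
    · exact (h ▸ mem_compOf_self hsep.2.1 : y ∈ compOf G S x)
  · rintro ⟨⟨s, hs⟩, C₁, C₂, hne, ⟨hC₁, hN₁⟩, ⟨hC₂, hN₂⟩⟩
    obtain ⟨x, hx⟩ := hC₁.1
    obtain ⟨y, hy⟩ := hC₂.1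
    have through : ∀ S' ⊆ S, ∀ s ∈ S, s ∉ S' → AvoidReach G S' x y := by
      intro S' hS' s hs hsS'
      obtain ⟨-, u, hu, hus⟩ : s ∈ neighborsOf G C₁ := hN₁ ▸ hs
      obtain ⟨-, w, hw, hws⟩ : s ∈ neighborsOf G C₂ := hN₂ ▸ hs
      exact (((hC₁.2.2.1 x hx u hu).anti hS').trans
        (avoidReach_of_adj hus (fun h => hC₁.notMem hu (hS' h)) hsS')).trans
        ((avoidReach_of_adj hws.symm hsS' fun h => hC₂.notMem hw (hS' h)).trans
          ((hC₂.2.2.1 w hw y hy).anti hS'))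
    refine ⟨x, y, ⟨hC₁.notMem hx, hC₂.notMem hy,
      (through ∅ (Set.empty_subset _) s hs (Set.notMem_empty s)).reachable,
      fun h => hne (hC₁.eq_of_mem hC₂ (hC₁.mem_of_avoidReach hx h) hy)⟩, ?_⟩
    intro S' hS' hsep'
    obtain ⟨t, htS, htS'⟩ := Set.exists_of_ssubset hS'
    exact hsep'.2.2.2 (through S' hS'.subset t htS htS')

lemma IsSeparator.exists_isMinSeparator [Finite V] (h : IsSeparator G S x y) :
    ∃ T, IsMinSeparator G T ∧ IsSeparator G T x y := by
  obtain ⟨T, -, hT⟩ := exists_minimal_le_of_wellFoundedLT (fun T => IsSeparator G T x y) S h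
  exact ⟨T, ⟨x, y, hT.prop, fun T' hT' h' => hT'.2 (hT.le_of_le h' hT'.1)⟩, hT.prop⟩

lemma avoidReach_eq_of_le (hle : G ≤ G')
    (h : ∀ a b, G'.Adj a b → a ∉ S → b ∉ S → AvoidReach G S a b) :
    AvoidReach G' S = AvoidReach G S := by
  funext x y
  refine propext ⟨fun hxy => ?_, AvoidReach.mono hle⟩
  exact AvoidReach.mem_of_closed (D := compOf G S x) (fun a ha b hb hab => AvoidReach.trans ha
    (h a b hab ha.notMem_right hb)) (mem_compOf_self hxy.notMem_left) hxy

lemma isCompOf_eq_of_avoidReach_eq (h : AvoidReach G' S = AvoidReach G S) :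
    IsCompOf G' S = IsCompOf G S := by
  funext C
  simp only [IsCompOf, h]

lemma parallel_eq_of_avoidReach_eq (h : AvoidReach G' S = AvoidReach G S) :
    Parallel G' S = Parallel G S := by
  funext T
  simp only [Parallel, isCompOf_eq_of_avoidReach_eq h]

lemma IsMinSeparator.of_fullComp (hS : IsMinSeparator G S)
    (h : ∀ C, IsFullComp G S C → IsFullComp G' S C) : IsMinSeparator G' S := by
  obtain ⟨hne, C₁, C₂, h12, h₁, h₂⟩ := isMinSeparator_iff.1 hS
  exact isMinSeparator_iff.2 ⟨hne, C₁, C₂, h12, h _ h₁, h _ h₂⟩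

lemma IsMinSeparator.of_le (hle : G ≤ G') (hS : IsMinSeparator G S)
    (h : AvoidReach G' S = AvoidReach G S) : IsMinSeparator G' S := by
  refine hS.of_fullComp fun C ⟨hC, hN⟩ => ?_
  have hC' : IsCompOf G' S C := by rwa [isCompOf_eq_of_avoidReach_eq h]
  refine ⟨hC', hC'.neighborsOf_subset.antisymm ?_⟩
  rw [← hN]
  exact fun v ⟨hv, u, hu, huv⟩ => ⟨hv, u, hu, hle huv⟩

lemma parallel_iff : Parallel G S T ↔
    ∀ t₁ ∈ T, ∀ t₂ ∈ T, t₁ ∉ S → t₂ ∉ S → AvoidReach G S t₁ t₂ := by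
  constructor
  · intro h t₁ h₁ t₂ h₂ h₁S h₂S
    have := h ⟨isCompOf_compOf h₁S, t₁, mem_compOf_self h₁S, h₁⟩
      ⟨isCompOf_compOf h₂S, t₂, mem_compOf_self h₂S, h₂⟩
    exact (this ▸ mem_compOf_self h₂S : t₂ ∈ compOf G S t₁)
  · rintro h C ⟨hC, t₁, ht₁C, ht₁⟩ C' ⟨hC', t₂, ht₂C, ht₂⟩
    exact hC.eq_of_mem hC' (hC.mem_of_avoidReach ht₁C
      (h t₁ ht₁ t₂ ht₂ (hC.notMem ht₁C) (hC'.notMem ht₂C))) ht₂C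

lemma parallel_self : Parallel G T T :=
  parallel_iff.2 fun _ h _ _ h' _ => absurd h h'

lemma parallel_of_pairwise {Φ : Set (Set V)} (h : Φ.Pairwise (Parallel G)) (hS : S ∈ Φ)
    (hT : T ∈ Φ) : Parallel G S T := by
  by_cases e : S = T
  · exact e ▸ parallel_self
  · exact h hS hT e

lemma parallel_of_isClique (hT : G.IsClique T) : Parallel G S T := by
  refine parallel_iff.2 fun t₁ h₁ t₂ h₂ h₁S h₂S => ?_
  by_cases e : t₁ = t₂
  · exact e ▸ .refl h₁S
  · exact avoidReach_of_adj (hT h₁ h₂ e) h₁S h₂S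

lemma IsMinSeparator.exists_comp_of_parallel (hT : IsMinSeparator G T) (h : Parallel G T S) :
    ∃ E, IsCompOf G S E ∧ T \ S ⊆ E ∧ T ∩ S ⊆ neighborsOf G E := by
  obtain ⟨-, F₁, F₂, hne, hF₁, hF₂⟩ := isMinSeparator_iff.1 hT
  obtain ⟨F, ⟨hF, hFN⟩, hFS⟩ : ∃ F, IsFullComp G T F ∧ Disjoint F S := by
    by_cases h₁ : Disjoint F₁ S
    · exact ⟨F₁, hF₁, h₁⟩
    by_cases h₂ : Disjoint F₂ S
    · exact ⟨F₂, hF₂, h₂⟩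
    exact absurd (h ⟨hF₁.1, Set.not_disjoint_iff_nonempty_inter.1 h₁⟩
      ⟨hF₂.1, Set.not_disjoint_iff_nonempty_inter.1 h₂⟩) hne
  obtain ⟨f, hf⟩ := hF.1
  have hFE : F ⊆ compOf G S f := fun u hu => hF.avoidReach_of_disjoint hFS hf hu
  refine ⟨compOf G S f, isCompOf_compOf (Set.disjoint_left.1 hFS hf), ?_, ?_⟩
  · rintro t ⟨htT, htS⟩
    obtain ⟨-, u, hu, hut⟩ : t ∈ neighborsOf G F := hFN ▸ htT
    exact AvoidReach.trans (hFE hu) (avoidReach_of_adj hut (Set.disjoint_left.1 hFS hu) htS)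
  · rintro t ⟨htT, htS⟩
    obtain ⟨-, u, hu, hut⟩ : t ∈ neighborsOf G F := hFN ▸ htT
    exact ⟨fun h => h.notMem_right htS, u, hFE hu, hut⟩

lemma IsMinSeparator.parallel_symm (hT : IsMinSeparator G T) (h : Parallel G T S) :
    Parallel G S T := by
  obtain ⟨E, hE, hTE, -⟩ := hT.exists_comp_of_parallel h
  rintro C ⟨hC, t, htC, htT⟩ C' ⟨hC', t', htC', htT'⟩
  exact (hC.eq_of_mem hE htC (hTE ⟨htT, hC.notMem htC⟩)).trans
    (hC'.eq_of_mem hE htC' (hTE ⟨htT', hC'.notMem htC'⟩)).symm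

end Separators

section Cycles

variable {H : SimpleGraph V} {m p q : ℕ} {g : ℕ → V}

lemma ZMod.natCast_injOn_Iio {n : ℕ} : Set.InjOn (Nat.cast : ℕ → ZMod n) (Set.Iio n) :=
  fun a ha b hb h => by
    simpa [ZMod.val_cast_of_lt ha, ZMod.val_cast_of_lt hb] using congrArg ZMod.val h

lemma ZMod.val_add_one_cases {n : ℕ} [NeZero n] (hn : 1 < n) (i : ZMod n) :
    (i.val + 1 < n ∧ (i + 1).val = i.val + 1) ∨ (i.val + 1 = n ∧ (i + 1).val = 0) := by
  have : Fact (1 < n) := ⟨hn⟩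
  rw [ZMod.val_add, ZMod.val_one]
  rcases Nat.lt_or_ge (i.val + 1) n with h | h
  · exact Or.inl ⟨h, Nat.mod_eq_of_lt h⟩
  · have h' : i.val + 1 = n := le_antisymm (ZMod.val_lt i) h
    exact Or.inr ⟨h', by rw [h', Nat.mod_self]⟩

/-- The cycle of `H` through `g 0, …, g (m - 1)`, in this order; `IsChordal` indexes cycles by
`ZMod m` instead. -/
def IsCycleSeq (H : SimpleGraph V) (m : ℕ) (g : ℕ → V) : Prop :=
  Set.InjOn g (Set.Iio m) ∧ (∀ k, k + 1 < m → H.Adj (g k) (g (k + 1))) ∧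
    H.Adj (g (m - 1)) (g 0)

def HasChord (H : SimpleGraph V) (m : ℕ) (g : ℕ → V) : Prop :=
  ∃ p q, p + 2 ≤ q ∧ q < m ∧ (0 < p ∨ q + 1 < m) ∧ H.Adj (g p) (g q)

lemma IsChordal.hasChord (hch : IsChordal H) (hm : 4 ≤ m) (hg : IsCycleSeq H m g) :
    HasChord H m g := by
  obtain ⟨hinj, hadj, hwrap⟩ := hg
  have : NeZero m := ⟨by omega⟩
  have hval : ∀ i j : ZMod m, j ≠ i + 1 → j.val ≠ i.val + 1 := fun i j h hv =>
    h (ZMod.val_injective m (by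
      rcases ZMod.val_add_one_cases (by omega) i with ⟨-, h'⟩ | ⟨h1, -⟩
      · rw [h', hv]
      · exact absurd (ZMod.val_lt j) (by omega)))
  have hwrapval : ∀ i j : ZMod m, i ≠ j + 1 → j.val + 1 = m → i.val ≠ 0 := fun i j h hj hi =>
    h (ZMod.val_injective m (by
      rcases ZMod.val_add_one_cases (by omega) j with ⟨h1, -⟩ | ⟨-, h'⟩
      · omega
      · rw [h', hi]))
  obtain ⟨i, j, hji, hij, hadj'⟩ := hch m hm (fun i => g i.val)
    (fun i j h => ZMod.val_injective m (hinj (ZMod.val_lt i) (ZMod.val_lt j) h)) fun i => by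
      rcases ZMod.val_add_one_cases (by omega) i with ⟨h1, h'⟩ | ⟨h1, h'⟩
      · simpa only [h'] using hadj _ h1
      · simpa only [h', show i.val = m - 1 by omega] using hwrap
  have hne : i.val ≠ j.val := fun h => hadj'.ne (congrArg g h)
  have := hval i j hji
  have := hval j i hij
  have := hwrapval i j hij
  have := hwrapval j i hji
  have := ZMod.val_lt i
  have := ZMod.val_lt j
  rcases Nat.lt_or_gt_of_ne hne with h | h
  · exact ⟨i.val, j.val, by omega, ZMod.val_lt j, by omega, hadj'⟩
  · exact ⟨j.val, i.val, by omega, ZMod.val_lt i, by omega, hadj'.symm⟩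

lemma isChordal_of_forall_hasChord (h : ∀ m g, 4 ≤ m → IsCycleSeq H m g → HasChord H m g) :
    IsChordal H := by
  intro n hn f hinj hadj
  have hcast : ∀ k : ℕ, ((k + 1 : ℕ) : ZMod n) = (k : ZMod n) + 1 := fun k => by push_cast; rfl
  obtain ⟨p, q, hpq, hq, hp, hadj'⟩ := h n (fun k => f k) hn
    ⟨fun a ha b hb hab => ZMod.natCast_injOn_Iio ha hb (hinj hab),
      fun k _ => by simpa only [hcast] using hadj k, by
        simpa only [← hcast, Nat.sub_add_cancel (by omega : 1 ≤ n), ZMod.natCast_self,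
          Nat.cast_zero] using hadj ((n - 1 : ℕ) : ZMod n)⟩
  have hne : ∀ a b, a < n → b < n → a ≠ b → (a : ZMod n) ≠ b :=
    fun a b ha hb hab h => hab (ZMod.natCast_injOn_Iio ha hb h)
  refine ⟨p, q, ?_, ?_, hadj'⟩
  · rw [← hcast]
    exact hne _ _ hq (by omega) (by omega)
  · rw [← hcast]
    rcases Nat.lt_or_ge (q + 1) n with h1 | h1
    · exact hne _ _ (by omega) h1 (by omega)
    · rw [show q + 1 = n by omega, ZMod.natCast_self, ← Nat.cast_zero]
      exact hne _ _ (by omega) (by omega) (by omega)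

lemma IsCycleSeq.adj_arcDown (hg : IsCycleSeq H m g) {t : ℕ} (ht : t < m + p) (hp : p < m) :
    H.Adj (g (if t ≤ p then p - t else m + p - t))
      (g (if t + 1 ≤ p then p - (t + 1) else m + p - (t + 1))) := by
  rcases Nat.lt_trichotomy t p with htp | rfl | htp
  · rw [if_pos (by omega), if_pos (by omega)]
    have := (hg.2.1 (p - (t + 1)) (by omega)).symm
    rwa [show p - (t + 1) + 1 = p - t by omega] at this
  · rw [if_pos le_rfl, if_neg (by omega), Nat.sub_self, show m + t - (t + 1) = m - 1 by omega]
    exact hg.2.2.symm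
  · rw [if_neg (by omega), if_neg (by omega)]
    have := (hg.2.1 (m + p - (t + 1)) (by omega)).symm
    rwa [show m + p - (t + 1) + 1 = m + p - t by omega] at this

lemma IsCycleSeq.inner (hg : IsCycleSeq H m g) (hpq : p + 2 ≤ q) (hq : q < m)
    (h : H.Adj (g p) (g q)) : IsCycleSeq H (q - p + 1) (fun t => g (p + t)) := by
  refine ⟨fun a ha b hb hab => ?_, fun t ht => ?_, ?_⟩
  · have := hg.1 (show p + a < m from by have := Set.mem_Iio.1 ha; omega)
      (show p + b < m from by have := Set.mem_Iio.1 hb; omega) hab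
    omega
  · simpa only [← add_assoc] using hg.2.1 (p + t) (by omega)
  · simpa only [show p + (q - p + 1 - 1) = q by omega, add_zero] using h.symm

lemma IsCycleSeq.outer (hg : IsCycleSeq H m g) (hpq : p + 2 ≤ q) (hq : q < m)
    (h : H.Adj (g p) (g q)) :
    IsCycleSeq H (m - (q - p - 1)) (fun t => g (if t ≤ p then t else t + (q - p - 1))) := by
  refine ⟨fun a ha b hb hab => ?_, fun t ht => ?_, ?_⟩
  · simp only [Set.mem_Iio] at ha hb
    have := hg.1 (show (if a ≤ p then a else a + (q - p - 1)) < m by split_ifs <;> omega)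
      (show (if b ≤ p then b else b + (q - p - 1)) < m by split_ifs <;> omega) hab
    split_ifs at this <;> omega
  · rcases Nat.lt_trichotomy t p with htp | rfl | htp
    · simpa [show t ≤ p by omega, show t + 1 ≤ p by omega] using hg.2.1 t (by omega)
    · simpa [show t + 1 + (q - t - 1) = q by omega] using h
    · simpa [show ¬t ≤ p by omega, show ¬t + 1 ≤ p by omega, show t + 1 + (q - p - 1) =
        t + (q - p - 1) + 1 by omega] using hg.2.1 (t + (q - p - 1)) (by omega)
  · simpa [show ¬m - (q - p - 1) - 1 ≤ p by omega,
      show m - (q - p - 1) - 1 + (q - p - 1) = m - 1 by omega] using hg.2.2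

lemma IsChordal.eq_four_of_unique_chord (hch : IsChordal H) (hg : IsCycleSeq H m g)
    (hm : 4 ≤ m) (hpq : p + 2 ≤ q) (hq : q < m) (h : H.Adj (g p) (g q))
    (hall : ∀ p' q', p' + 2 ≤ q' → q' < m → (0 < p' ∨ q' + 1 < m) → H.Adj (g p') (g q') →
      p' = p ∧ q' = q) :
    m = 4 ∧ q = p + 2 := by
  have hinner : q - p + 1 < 4 := by
    by_contra h4
    obtain ⟨a, b, hab, hb, ha, hadj⟩ :=
      hch.hasChord (by omega) (hg.inner hpq hq h)
    have := hall (p + a) (p + b) (by omega) (by omega) (by omega) hadj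
    omega
  have houter : m - (q - p - 1) < 4 := by
    by_contra h4
    obtain ⟨a, b, hab, hb, ha, hadj⟩ :=
      hch.hasChord (by omega) (hg.outer hpq hq h)
    have := hall _ _ (by split_ifs <;> omega) (by split_ifs <;> omega)
      (by split_ifs <;> omega) hadj
    split_ifs at this <;> omega
  omega

end Cycles

section EdgesBetween

variable {H : SimpleGraph V} {S B Y : Set V} {a b : V}

def edgesBetween (B Y : Set V) : Set (Sym2 V) := {e | ∃ b ∈ B, ∃ y ∈ Y, e = s(b, y)}

lemma mk_mem_edgesBetween : s(a, b) ∈ edgesBetween B Y ↔ a ∈ B ∧ b ∈ Y ∨ b ∈ B ∧ a ∈ Y := by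
  constructor
  · rintro ⟨c, hc, d, hd, he⟩
    rcases Sym2.eq_iff.1 he with ⟨rfl, rfl⟩ | ⟨rfl, rfl⟩
    exacts [Or.inl ⟨hc, hd⟩, Or.inr ⟨hc, hd⟩]
  · rintro (⟨ha, hb⟩ | ⟨hb, ha⟩)
    exacts [⟨a, ha, b, hb, rfl⟩, ⟨b, hb, a, ha, Sym2.eq_swap⟩]

lemma exists_mem_succ_notMem {w : ℕ → V} {d : ℕ} (h0 : w 0 ∈ B) (hd : w d ∉ B) :
    ∃ t < d, w t ∈ B ∧ w (t + 1) ∉ B := by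
  induction d with
  | zero => exact absurd h0 hd
  | succ d ih =>
    by_cases hwd : w d ∈ B
    · exact ⟨d, by omega, hwd, hd⟩
    · obtain ⟨t, ht, h⟩ := ih hwd
      exact ⟨t, by omega, h⟩

lemma exists_interior_mem_of_deleteEdges (hBY : Disjoint B Y)
    (hexit : ∀ b ∈ B, ∀ v, H.Adj b v → v ∈ B ∪ S ∪ Y) {d : ℕ} (w : ℕ → V)
    (hw : ∀ t < d, (H.deleteEdges (edgesBetween B Y)).Adj (w t) (w (t + 1)))
    (hends : w 0 ∈ B ∧ w d ∈ Y ∨ w d ∈ B ∧ w 0 ∈ Y) : ∃ t, 0 < t ∧ t < d ∧ w t ∈ S := by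
  have forward : ∀ w : ℕ → V, (∀ t < d, (H.deleteEdges (edgesBetween B Y)).Adj (w t) (w (t + 1))) →
      w 0 ∈ B → w d ∈ Y → ∃ t, 0 < t ∧ t < d ∧ w t ∈ S := by
    intro w hw h0 hd
    obtain ⟨t, htd, htB, ht'B⟩ := exists_mem_succ_notMem h0 (Set.disjoint_right.1 hBY hd)
    have hstep := hw t htd
    rw [SimpleGraph.deleteEdges_adj, mk_mem_edgesBetween, not_or] at hstep
    have htd' : t + 1 ≠ d := fun h => hstep.2.1 ⟨htB, h ▸ hd⟩
    refine ⟨t + 1, by omega, by omega, ?_⟩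
    rcases hexit _ htB _ hstep.1 with (h | h) | h
    exacts [absurd h ht'B, h, absurd ⟨htB, h⟩ hstep.2.1]
  rcases hends with ⟨h0, hd⟩ | ⟨hd, h0⟩
  · exact forward w hw h0 hd
  · obtain ⟨t, ht, htd, htS⟩ := forward (fun t => w (d - t))
      (fun t ht => by
        simpa [show d - (t + 1) + 1 = d - t by omega] using (hw (d - (t + 1)) (by omega)).symm)
      (by simpa using hd) (by simpa using h0)
    exact ⟨d - t, by omega, by omega, htS⟩

theorem IsChordal.deleteEdges_edgesBetween (hch : IsChordal H) (hS : H.IsClique S)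
    (hBS : Disjoint B S) (hBY : Disjoint B Y) (hexit : ∀ b ∈ B, ∀ v, H.Adj b v → v ∈ B ∪ S ∪ Y) :
    IsChordal (H.deleteEdges (edgesBetween B Y)) := by
  have hle : H.deleteEdges (edgesBetween B Y) ≤ H := SimpleGraph.deleteEdges_le _
  refine isChordal_of_forall_hasChord fun m g hm hg => ?_
  obtain ⟨p, q, hpq, hq, hpq', hadj⟩ :=
    hch.hasChord hm ⟨hg.1, fun k hk => hle (hg.2.1 k hk), hle hg.2.2⟩
  by_cases hH' : (H.deleteEdges (edgesBetween B Y)).Adj (g p) (g q)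
  · exact ⟨p, q, hpq, hq, hpq', hH'⟩
  have hends : g p ∈ B ∧ g q ∈ Y ∨ g q ∈ B ∧ g p ∈ Y := by
    rw [SimpleGraph.deleteEdges_adj, not_and, not_not] at hH'
    exact mk_mem_edgesBetween.1 (hH' hadj)
  -- the two arcs of the cycle between `g p` and `g q` each pass through `S`
  obtain ⟨t₁, ht₁, ht₁', hS₁⟩ := exists_interior_mem_of_deleteEdges hBY hexit
    (d := q - p) (fun t => g (p + t))
    (fun t ht => by simpa only [← add_assoc] using hg.2.1 (p + t) (by omega))
    (by simpa only [add_zero, show p + (q - p) = q by omega] using hends)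
  obtain ⟨t₂, ht₂, ht₂', hS₂⟩ := exists_interior_mem_of_deleteEdges hBY hexit
    (d := m - q + p) (fun t => g (if t ≤ p then p - t else m + p - t))
    (fun t ht => hg.adj_arcDown (by omega) (by omega))
    (by rwa [if_pos (Nat.zero_le _), if_neg (by omega), Nat.sub_zero,
      show m + p - (m - q + p) = q by omega])
  set k₂ := if t₂ ≤ p then p - t₂ else m + p - t₂ with hk₂
  have hk₂m : k₂ < m := by rw [hk₂]; split_ifs <;> omega
  have hne : p + t₁ ≠ k₂ := by rw [hk₂]; split_ifs <;> omega
  have hchord : (H.deleteEdges (edgesBetween B Y)).Adj (g (p + t₁)) (g k₂) := by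
    rw [SimpleGraph.deleteEdges_adj, mk_mem_edgesBetween]
    refine ⟨hS hS₁ hS₂ fun h => hne (hg.1 (by simp only [Set.mem_Iio]; omega) hk₂m h), ?_⟩
    simp [Set.disjoint_right.1 hBS hS₁, Set.disjoint_right.1 hBS hS₂]
  by_cases ht₂p : t₂ ≤ p
  · rw [hk₂, if_pos ht₂p] at hchord
    exact ⟨p - t₂, p + t₁, by omega, by omega, by omega, hchord.symm⟩
  · rw [hk₂, if_neg ht₂p] at hchord
    exact ⟨p + t₁, m + p - t₂, by omega, by omega, by omega, hchord⟩

end EdgesBetween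

section Dirac

variable {H : SimpleGraph V} {S C C₁ C₂ : Set V} {a b : V} {m m₁ m₂ : ℕ} {g g₁ g₂ : ℕ → V}

theorem isChordal_of_forall_isClique [Finite V]
    (h : ∀ S, IsMinSeparator H S → H.IsClique S) : IsChordal H := by
  refine isChordal_of_forall_hasChord fun m g hm hg => by_contra fun hno => ?_
  have hinj : ∀ i j, i < m → j < m → i ≠ j → g i ≠ g j := fun i j hi hj hij e => hij (hg.1 hi hj e)
  have h01 : H.Adj (g 0) (g 1) := hg.2.1 0 (by omega)
  have h12 : H.Adj (g 1) (g 2) := hg.2.1 1 (by omega)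
  obtain ⟨T, hT, hsep⟩ := (isSeparator_compl_pair (hinj 0 2 (by omega) (by omega) (by omega))
    (fun h => hno ⟨0, 2, le_rfl, by omega, Or.inr (by omega), h⟩)
    (h01.reachable.trans h12.reachable)).exists_isMinSeparator
  -- going on from `g 2` around the cycle back to `g 0`, one has to cross `T`
  obtain ⟨k, hk, hkm, hkT⟩ : ∃ k, 3 ≤ k ∧ k < m ∧ g k ∈ T := by
    by_contra! hk
    refine hsep.2.2.2 (AvoidReach.symm ?_)
    have := avoidReach_of_chain (S := T) (w := fun t => g (2 + t)) (d := m - 3)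
      (fun t ht => hg.2.1 (2 + t) (by omega)) fun t ht => by
        rcases Nat.eq_zero_or_pos t with rfl | ht0
        · exact hsep.2.1
        · exact hk _ (by omega) (by omega)
    rw [show 2 + (m - 3) = m - 1 by omega] at this
    exact this.trans (avoidReach_of_adj hg.2.2 (hk _ (by omega) (by omega)) hsep.1)
  exact hno ⟨1, k, by omega, hkm, Or.inl one_pos,
    h T hT (hsep.mem_of_adj h01 h12) hkT (hinj 1 k (by omega) hkm (by omega))⟩

def IsWalkThrough (H : SimpleGraph V) (C : Set V) (a b : V) (m : ℕ) (g : ℕ → V) : Prop :=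
  g 0 = a ∧ g m = b ∧ (∀ k < m, H.Adj (g k) (g (k + 1))) ∧ ∀ k, 0 < k → k < m → g k ∈ C

def IsChordlessSeq (H : SimpleGraph V) (m : ℕ) (g : ℕ → V) : Prop :=
  Set.InjOn g (Set.Iic m) ∧ ∀ i j, i + 2 ≤ j → j ≤ m → ¬H.Adj (g i) (g j)

lemma exists_isWalkThrough (hC : IsCompOf H S C) (ha : a ∈ neighborsOf H C)
    (hb : b ∈ neighborsOf H C) : ∃ m g, IsWalkThrough H C a b m g := by
  obtain ⟨-, u, hu, hua⟩ := ha
  obtain ⟨-, w, hw, hwb⟩ := hb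
  obtain ⟨d, r, hr0, hrd, hr, hrC⟩ := (hC.2.2.1 u hu w hw).exists_seq
  refine ⟨d + 2, fun k => if k = 0 then a else if k ≤ d + 1 then r (k - 1) else b,
    by simp, by simp, fun k hk => ?_, fun k hk hk' => ?_⟩
  · rcases Nat.eq_zero_or_pos k with rfl | hk0
    · simpa [hr0] using hua.symm
    rcases Nat.lt_or_ge k (d + 1) with hkd | hkd
    · simpa [show k ≠ 0 by omega, show k ≤ d + 1 by omega, show k ≤ d by omega,
        show k - 1 + 1 = k by omega]
        using hr (k - 1) (by omega)
    · simpa [show k ≠ 0 by omega, show k = d + 1 by omega, hrd] using hwb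
  · simpa [show k ≠ 0 by omega, show k ≤ d + 1 by omega] using
      hC.mem_of_avoidReach hu (hrC (k - 1) (by omega))

lemma IsWalkThrough.skip (hw : IsWalkThrough H C a b m g) {i s : ℕ} (hs : i + s < m)
    (hstep : H.Adj (g i) (g (i + 1 + s))) :
    IsWalkThrough H C a b (m - s) (fun k => g (if k ≤ i then k else k + s)) := by
  obtain ⟨h0, hm, hadj, hC⟩ := hw
  refine ⟨by simpa using h0, by simpa [show ¬m - s ≤ i by omega, show m - s + s = m by omega],
    fun k hk => ?_, fun k hk hk' => ?_⟩
  · rcases Nat.lt_trichotomy k i with hki | rfl | hki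
    · simpa [show k ≤ i by omega, show k + 1 ≤ i by omega] using hadj k (by omega)
    · simpa [show k + 1 + s = k + 1 + s by omega] using hstep
    · simpa [show ¬k ≤ i by omega, show ¬k + 1 ≤ i by omega, show k + 1 + s = k + s + 1 by omega]
        using hadj (k + s) (by omega)
  · show g (if k ≤ i then k else k + s) ∈ C
    split_ifs <;> exact hC _ (by omega) (by omega)

lemma IsWalkThrough.exists_chordless (h : ∃ m g, IsWalkThrough H C a b m g) :
    ∃ m g, IsWalkThrough H C a b m g ∧ IsChordlessSeq H m g := by
  classical
  obtain ⟨g, hw⟩ := Nat.find_spec h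
  have hmin : ∀ m' g', IsWalkThrough H C a b m' g' → Nat.find h ≤ m' :=
    fun m' g' hw' => Nat.find_min' h ⟨g', hw'⟩
  refine ⟨Nat.find h, g, hw, fun i hi j hj hij => ?_, fun i j hij hj hadj => ?_⟩
  · simp only [Set.mem_Iic] at hi hj
    -- cutting out a repeated vertex would shorten the walk
    have cut : ∀ i j, i < j → j ≤ Nat.find h → g i = g j → False := by
      intro i j hij hj e
      rcases hj.lt_or_eq with hj | rfl
      · have := hmin _ _ (hw.skip (i := i) (s := j - i) (by omega)
          (by rw [e, show i + 1 + (j - i) = j + 1 by omega]; exact hw.2.2.1 j hj))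
        omega
      · have := hmin i g ⟨hw.1, e.trans hw.2.1, fun k hk => hw.2.2.1 k (by omega),
          fun k hk hk' => hw.2.2.2 k hk (by omega)⟩
        omega
    rcases Nat.lt_trichotomy i j with h' | h' | h'
    exacts [(cut i j h' hj hij).elim, h', (cut j i h' hi hij.symm).elim]
  · have := hmin _ _ (hw.skip (i := i) (s := j - i - 1) (by omega)
      (by rwa [show i + 1 + (j - i - 1) = j by omega]))
    omega

def glueSeq (m₁ m₂ : ℕ) (g₁ g₂ : ℕ → V) (k : ℕ) : V :=
  if k ≤ m₁ then g₁ k else g₂ (m₁ + m₂ - k)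

lemma glueSeq_of_le {k : ℕ} (hk : k ≤ m₁) : glueSeq m₁ m₂ g₁ g₂ k = g₁ k := if_pos hk

lemma glueSeq_of_ge (h : g₁ m₁ = g₂ m₂) {k : ℕ} (hk : m₁ ≤ k) :
    glueSeq m₁ m₂ g₁ g₂ k = g₂ (m₁ + m₂ - k) := by
  unfold glueSeq
  split_ifs with h'
  · rw [show k = m₁ by omega, h, Nat.add_sub_cancel_left]
  · rfl

lemma isCycleSeq_glueSeq (hw₁ : IsWalkThrough H C₁ a b m₁ g₁)
    (hw₂ : IsWalkThrough H C₂ a b m₂ g₂) (hi₁ : Set.InjOn g₁ (Set.Iic m₁))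
    (hi₂ : Set.InjOn g₂ (Set.Iic m₂)) (hm₂ : 0 < m₂) (hdisj : Disjoint C₁ C₂) (ha : a ∉ C₂)
    (hb : b ∉ C₂) : IsCycleSeq H (m₁ + m₂) (glueSeq m₁ m₂ g₁ g₂) := by
  have hend : g₁ m₁ = g₂ m₂ := hw₁.2.1.trans hw₂.2.1.symm
  have hcross : ∀ i j, i ≤ m₁ → m₁ < j → j < m₁ + m₂ →
      glueSeq m₁ m₂ g₁ g₂ i ≠ glueSeq m₁ m₂ g₁ g₂ j := by
    intro i j hi hj hj' e
    rw [glueSeq_of_le hi, glueSeq_of_ge hend hj.le] at e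
    have hC₂ := hw₂.2.2.2 (m₁ + m₂ - j) (by omega) (by omega)
    rw [← e] at hC₂
    rcases Nat.eq_zero_or_pos i with rfl | hi0
    · exact ha (hw₁.1 ▸ hC₂)
    rcases hi.lt_or_eq with hi | rfl
    · exact Set.disjoint_left.1 hdisj (hw₁.2.2.2 i hi0 hi) hC₂
    · exact hb (hw₁.2.1 ▸ hC₂)
  refine ⟨fun i hi j hj e => ?_, fun k hk => ?_, ?_⟩
  · simp only [Set.mem_Iio] at hi hj
    rcases le_or_gt i m₁ with hi' | hi' <;> rcases le_or_gt j m₁ with hj' | hj'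
    · rw [glueSeq_of_le hi', glueSeq_of_le hj'] at e
      exact hi₁ (Set.mem_Iic.2 hi') (Set.mem_Iic.2 hj') e
    · exact (hcross i j hi' hj' hj e).elim
    · exact (hcross j i hj' hi' hi e.symm).elim
    · rw [glueSeq_of_ge hend hi'.le, glueSeq_of_ge hend hj'.le] at e
      have := hi₂ (Set.mem_Iic.2 (by omega : m₁ + m₂ - i ≤ m₂))
        (Set.mem_Iic.2 (by omega : m₁ + m₂ - j ≤ m₂)) e
      omega
  · rcases Nat.lt_or_ge k m₁ with hk₁ | hk₁
    · rw [glueSeq_of_le hk₁.le, glueSeq_of_le hk₁]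
      exact hw₁.2.2.1 k hk₁
    · rw [glueSeq_of_ge hend hk₁, glueSeq_of_ge hend (by omega)]
      have := hw₂.2.2.1 (m₁ + m₂ - (k + 1)) (by omega)
      rw [show m₁ + m₂ - (k + 1) + 1 = m₁ + m₂ - k by omega] at this
      exact this.symm
  · rw [glueSeq_of_ge hend (by omega), glueSeq_of_le (Nat.zero_le _),
      show m₁ + m₂ - (m₁ + m₂ - 1) = 0 + 1 by omega, hw₁.1, ← hw₂.1]
    exact (hw₂.2.2.1 0 hm₂).symm

lemma not_hasChord_glueSeq (hw₁ : IsWalkThrough H C₁ a b m₁ g₁)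
    (hw₂ : IsWalkThrough H C₂ a b m₂ g₂) (hc₁ : IsChordlessSeq H m₁ g₁)
    (hc₂ : IsChordlessSeq H m₂ g₂) (hcross : ∀ u ∈ C₁, ∀ v ∈ C₂, ¬H.Adj u v) :
    ¬HasChord H (m₁ + m₂) (glueSeq m₁ m₂ g₁ g₂) := by
  have hend : g₁ m₁ = g₂ m₂ := hw₁.2.1.trans hw₂.2.1.symm
  rintro ⟨p, q, hpq, hq, hp, hadj⟩
  rcases le_or_gt q m₁ with hq₁ | hq₁
  · rw [glueSeq_of_le (by omega), glueSeq_of_le hq₁] at hadj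
    exact hc₁.2 p q hpq hq₁ hadj
  rw [glueSeq_of_ge hend hq₁.le] at hadj
  rcases le_or_gt m₁ p with hp₁ | hp₁
  · rw [glueSeq_of_ge hend hp₁] at hadj
    exact hc₂.2 _ _ (by omega) (by omega) hadj.symm
  rw [glueSeq_of_le hp₁.le] at hadj
  rcases Nat.eq_zero_or_pos p with rfl | hp0
  · rw [hw₁.1, ← hw₂.1] at hadj
    exact hc₂.2 0 _ (by omega) (by omega) hadj
  · exact hcross _ (hw₁.2.2.2 p hp0 hp₁) _ (hw₂.2.2.2 _ (by omega) (by omega)) hadj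

theorem IsChordal.isClique_of_isMinSeparator (hch : IsChordal H) (hS : IsMinSeparator H S) :
    H.IsClique S := by
  obtain ⟨-, C₁, C₂, hne, ⟨hC₁, hN₁⟩, ⟨hC₂, hN₂⟩⟩ := isMinSeparator_iff.1 hS
  intro a ha b hb hab
  by_contra hnadj
  have hlen : ∀ {C m g}, IsWalkThrough H C a b m g → 2 ≤ m := by
    rintro C m g ⟨h0, hm, hadj, -⟩
    by_contra h
    interval_cases m
    · exact hab (h0.symm.trans hm)
    · exact hnadj (h0 ▸ hm ▸ hadj 0 one_pos)
  obtain ⟨m₁, g₁, hw₁, hc₁⟩ := IsWalkThrough.exists_chordless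
    (exists_isWalkThrough hC₁ (hN₁.symm ▸ ha) (hN₁.symm ▸ hb))
  obtain ⟨m₂, g₂, hw₂, hc₂⟩ := IsWalkThrough.exists_chordless
    (exists_isWalkThrough hC₂ (hN₂.symm ▸ ha) (hN₂.symm ▸ hb))
  have hdisj : Disjoint C₁ C₂ :=
    Set.disjoint_left.2 fun v h₁ h₂ => hne (hC₁.eq_of_mem hC₂ h₁ h₂)
  have hcross : ∀ u ∈ C₁, ∀ v ∈ C₂, ¬H.Adj u v := fun u hu v hv huv =>
    Set.disjoint_left.1 hdisj (hC₁.adj_mem hu huv (hC₂.notMem hv)) hv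
  have hm₁ := hlen hw₁
  have hm₂ := hlen hw₂
  exact not_hasChord_glueSeq hw₁ hw₂ hc₁ hc₂ hcross
    (hch.hasChord (by omega) (isCycleSeq_glueSeq hw₁ hw₂ hc₁.1 hc₂.1
      (by omega) hdisj (fun h => hC₂.notMem h ha) fun h => hC₂.notMem h hb))

end Dirac

section MinimalTriangulation

variable {G H : SimpleGraph V} {S T C B Y : Set V} {u v : V}

lemma IsMinimalTriangulation.not_adj_of_edgesBetween (hmt : IsMinimalTriangulation G H)
    (hS : H.IsClique S) (hBS : Disjoint B S) (hBY : Disjoint B Y)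
    (hexit : ∀ b ∈ B, ∀ v, H.Adj b v → v ∈ B ∪ S ∪ Y) (hG : ∀ b ∈ B, ∀ y ∈ Y, ¬G.Adj b y)
    {b y : V} (hb : b ∈ B) (hy : y ∈ Y) : ¬H.Adj b y := by
  intro hby
  have hGle : G ≤ H.deleteEdges (edgesBetween B Y) := fun u v huv => by
    rw [SimpleGraph.deleteEdges_adj, mk_mem_edgesBetween]
    refine ⟨hmt.1.2 huv, ?_⟩
    rintro (⟨hu, hv⟩ | ⟨hv, hu⟩)
    exacts [hG u hu v hv huv, hG v hv u hu huv.symm]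
  have heq := hmt.2 _ ⟨hmt.1.1.deleteEdges_edgesBetween hS hBS hBY hexit, hGle⟩
    (SimpleGraph.deleteEdges_le _)
  rw [← heq, SimpleGraph.deleteEdges_adj] at hby
  exact hby.2 (mk_mem_edgesBetween.2 (Or.inl ⟨hb, hy⟩))

lemma IsMinimalTriangulation.avoidReach_eq (hmt : IsMinimalTriangulation G H)
    (hS : H.IsClique S) : AvoidReach H S = AvoidReach G S := by
  refine avoidReach_eq_of_le hmt.1.2 fun a b hab ha hb => by_contra fun hnot => ?_
  refine hmt.not_adj_of_edgesBetween hS (B := compOf G S a) (Y := (compOf G S a ∪ S)ᶜ)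
    (Set.disjoint_left.2 fun _ h => h.notMem_right)
    (Set.disjoint_left.2 fun _ hv hvY => hvY (Or.inl hv)) (fun _ _ v _ => em _)
    (fun c hc y hy hcy => hy (Or.inl (AvoidReach.trans hc
      (avoidReach_of_adj hcy hc.notMem_right fun h => hy (Or.inr h)))))
    (mem_compOf_self ha) (fun h => h.elim hnot hb) hab

lemma IsMinimalTriangulation.neighborsOf_eq (hmt : IsMinimalTriangulation G H)
    (hS : H.IsClique S) (hC : IsCompOf H S C) : neighborsOf G C = neighborsOf H C := by
  refine Set.Subset.antisymm (fun v ⟨hv, u, hu, huv⟩ => ⟨hv, u, hu, hmt.1.2 huv⟩)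
    fun s hs => by_contra fun hsG => ?_
  obtain ⟨hsC, u, hu, hus⟩ := hs
  refine hmt.not_adj_of_edgesBetween hS (B := C) (Y := {s}) hC.2.1
    (Set.disjoint_singleton_right.2 hsC) (fun b hb v hbv => ?_)
    (fun b hb y hy hby => hsG ⟨hsC, b, hb, Set.mem_singleton_iff.1 hy ▸ hby⟩) hu rfl hus
  by_cases hv : v ∈ S
  · exact Or.inl (Or.inr hv)
  · exact Or.inl (Or.inl (hC.adj_mem hb hbv hv))

lemma IsMinimalTriangulation.minSeps_subset (hmt : IsMinimalTriangulation G H) :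
    minSeps H ⊆ minSeps G := by
  intro S hS
  have hcl := hmt.1.1.isClique_of_isMinSeparator hS
  exact IsMinSeparator.of_fullComp hS fun C ⟨hC, hN⟩ =>
    ⟨by rwa [← isCompOf_eq_of_avoidReach_eq (hmt.avoidReach_eq hcl)],
      (hmt.neighborsOf_eq hcl hC).trans hN⟩

lemma IsMinimalTriangulation.parallel (hmt : IsMinimalTriangulation G H) (hS : S ∈ minSeps H)
    (hT : T ∈ minSeps H) : Parallel G S T := by
  rw [← parallel_eq_of_avoidReach_eq (hmt.avoidReach_eq (hmt.1.1.isClique_of_isMinSeparator hS))]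
  exact parallel_of_isClique (hmt.1.1.isClique_of_isMinSeparator hT)

lemma IsMinimalTriangulation.not_isChordal_deleteEdges (hmt : IsMinimalTriangulation G H)
    (huv : H.Adj u v) (hG : ¬G.Adj u v) : ¬IsChordal (H.deleteEdges {s(u, v)}) := by
  intro hc
  have hGle : G ≤ H.deleteEdges {s(u, v)} := fun a b hab => by
    refine SimpleGraph.deleteEdges_adj.2 ⟨hmt.1.2 hab, fun he => hG ?_⟩
    rcases Sym2.eq_iff.1 (Set.mem_singleton_iff.1 he) with ⟨rfl, rfl⟩ | ⟨rfl, rfl⟩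
    exacts [hab, hab.symm]
  rw [← hmt.2 _ ⟨hc, hGle⟩ (SimpleGraph.deleteEdges_le _), SimpleGraph.deleteEdges_adj] at huv
  exact huv.2 rfl

lemma IsMinimalTriangulation.exists_square_of_fill (hmt : IsMinimalTriangulation G H)
    (huv : H.Adj u v) (hG : ¬G.Adj u v) : ∃ x y, H.Adj u x ∧ H.Adj x v ∧ H.Adj v y ∧
      H.Adj y u ∧ x ≠ y ∧ ¬H.Adj x y := by
  have hle : H.deleteEdges {s(u, v)} ≤ H := SimpleGraph.deleteEdges_le _
  obtain ⟨m, g, hm, hg, hno⟩ : ∃ m g, 4 ≤ m ∧ IsCycleSeq (H.deleteEdges {s(u, v)}) m g ∧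
      ¬HasChord (H.deleteEdges {s(u, v)}) m g := by
    by_contra! h
    exact hmt.not_isChordal_deleteEdges huv hG (isChordal_of_forall_hasChord h)
  have hgH : IsCycleSeq H m g := ⟨hg.1, fun k hk => hle (hg.2.1 k hk), hle hg.2.2⟩
  have hchord : ∀ p q, p + 2 ≤ q → q < m → (0 < p ∨ q + 1 < m) → H.Adj (g p) (g q) →
      s(g p, g q) = s(u, v) := fun p q h₁ h₂ h₃ h => by_contra fun hne =>
    hno ⟨p, q, h₁, h₂, h₃, SimpleGraph.deleteEdges_adj.2 ⟨h, hne⟩⟩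
  obtain ⟨p, q, hpq, hq, hp, hadj⟩ := hmt.1.1.hasChord hm hgH
  have hinj : ∀ i j, i < m → j < m → g i = g j → i = j := fun i j hi hj => hg.1 hi hj
  have hall : ∀ p' q', p' + 2 ≤ q' → q' < m → (0 < p' ∨ q' + 1 < m) →
      H.Adj (g p') (g q') → p' = p ∧ q' = q := by
    intro p' q' h₁ h₂ h₃ h
    rcases Sym2.eq_iff.1 ((hchord p' q' h₁ h₂ h₃ h).trans (hchord p q hpq hq hp hadj).symm)
      with ⟨e₁, e₂⟩ | ⟨e₁, e₂⟩
    · exact ⟨hinj _ _ (by omega) (by omega) e₁, hinj _ _ h₂ hq e₂⟩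
    · have := hinj _ _ (by omega) hq e₁
      have := hinj _ _ h₂ (by omega) e₂
      omega
  obtain ⟨rfl, rfl⟩ := hmt.1.1.eq_four_of_unique_chord hgH hm hpq hq hadj hall
  obtain ⟨x, y, hux, hxv, hvy, hyu, hxy, hnxy⟩ : ∃ x y, H.Adj (g p) x ∧ H.Adj x (g (p + 2)) ∧
      H.Adj (g (p + 2)) y ∧ H.Adj y (g p) ∧ x ≠ y ∧ ¬H.Adj x y := by
    obtain rfl | rfl : p = 0 ∨ p = 1 := by omega
    · exact ⟨g 1, g 3, hgH.2.1 0 (by omega), hgH.2.1 1 (by omega), hgH.2.1 2 (by omega),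
        hgH.2.2, fun e => absurd (hinj 1 3 (by omega) (by omega) e) (by omega),
        fun h => absurd (hall 1 3 (by omega) (by omega) (by omega) h) (by omega)⟩
    · exact ⟨g 2, g 0, hgH.2.1 1 (by omega), hgH.2.1 2 (by omega), hgH.2.2,
        hgH.2.1 0 (by omega), fun e => absurd (hinj 2 0 (by omega) (by omega) e) (by omega),
        fun h => absurd (hall 0 2 (by omega) (by omega) (by omega) h.symm) (by omega)⟩
  rcases Sym2.eq_iff.1 (hchord p (p + 2) hpq hq hp hadj) with ⟨rfl, rfl⟩ | ⟨rfl, rfl⟩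
  · exact ⟨x, y, hux, hxv, hvy, hyu, hxy, hnxy⟩
  · exact ⟨x, y, hxv.symm, hux.symm, hyu.symm, hvy.symm, hxy, hnxy⟩

lemma IsMinimalTriangulation.exists_minSep_of_fill [Finite V] (hmt : IsMinimalTriangulation G H)
    (huv : H.Adj u v) (hG : ¬G.Adj u v) : ∃ S ∈ minSeps H, u ∈ S ∧ v ∈ S := by
  obtain ⟨x, y, hux, hxv, hvy, hyu, hxy, hnxy⟩ := hmt.exists_square_of_fill huv hG
  obtain ⟨T, hT, hsep⟩ :=
    (isSeparator_compl_pair hxy hnxy (hxv.reachable.trans hvy.reachable)).exists_isMinSeparator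
  exact ⟨T, hT, hsep.mem_of_adj hux.symm hyu.symm, hsep.mem_of_adj hxv hvy⟩

lemma IsMinimalTriangulation.eq_saturate [Finite V] (hmt : IsMinimalTriangulation G H) :
    H = saturate G (minSeps H) := by
  ext a b
  refine ⟨fun hab => ⟨hab.ne, ?_⟩, ?_⟩
  · by_cases hG : G.Adj a b
    · exact Or.inl hG
    · exact Or.inr (hmt.exists_minSep_of_fill hab hG)
  · rintro ⟨hne, hG | ⟨S, hS, ha, hb⟩⟩
    · exact hmt.1.2 hG
    · exact hmt.1.1.isClique_of_isMinSeparator hS ha hb hne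

lemma IsMinimalTriangulation.maxPairwiseParallel [Finite V] (hmt : IsMinimalTriangulation G H) :
    MaxPairwiseParallel G (minSeps H) := by
  refine ⟨hmt.minSeps_subset, fun S hS T hT _ => hmt.parallel hS hT,
    fun Ψ hΨ hpar hsub => Set.Subset.antisymm (fun T hT => ?_) hsub⟩
  -- a fill edge lies in a separator of `Ψ` parallel to `T`, so it does not cross `T`
  refine IsMinSeparator.of_le hmt.1.2 (hΨ hT)
    (avoidReach_eq_of_le hmt.1.2 fun a b hab ha hb => ?_)
  by_cases hG : G.Adj a b
  · exact avoidReach_of_adj hG ha hb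
  obtain ⟨S, hS, haS, hbS⟩ := hmt.exists_minSep_of_fill hab hG
  have hTS : T ≠ S := by
    rintro rfl
    exact ha haS
  exact parallel_iff.1 (hpar hT (hsub hS) hTS) a haS b hbS ha hb

end MinimalTriangulation

section Saturation

variable {G B : SimpleGraph V} {Φ : Set (Set V)} {S T : Set V}

lemma le_saturate (G : SimpleGraph V) (Φ : Set (Set V)) : G ≤ saturate G Φ :=
  fun _ _ h => ⟨h.ne, Or.inl h⟩

lemma saturate_empty (G : SimpleGraph V) : saturate G ∅ = G := by
  ext a b
  exact ⟨fun ⟨_, h⟩ => h.resolve_right (by simp), fun h => ⟨h.ne, Or.inl h⟩⟩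

lemma saturate_insert (G : SimpleGraph V) (Φ : Set (Set V)) (T : Set V) :
    saturate G (insert T Φ) = saturate (saturate G Φ) {T} := by
  ext a b
  simp only [saturate, Set.mem_insert_iff, Set.mem_singleton_iff, exists_eq_or_imp,
    exists_eq_left]
  grind

lemma avoidReach_saturate (h : ∀ T ∈ Φ, Parallel G S T) :
    AvoidReach (saturate G Φ) S = AvoidReach G S :=
  avoidReach_eq_of_le (le_saturate G Φ) fun a b ⟨_, hab⟩ ha hb => hab.elim
    (fun h => avoidReach_of_adj h ha hb) fun ⟨T, hT, haT, hbT⟩ =>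
      parallel_iff.1 (h T hT) a haT b hbT ha hb

lemma IsMinSeparator.saturate_of_parallel (hS : IsMinSeparator G S) (h : ∀ T ∈ Φ, Parallel G S T) :
    IsMinSeparator (saturate G Φ) S :=
  IsMinSeparator.of_le (le_saturate G Φ) hS (avoidReach_saturate h)

lemma parallel_of_isMinSeparator_saturate (hS : IsMinSeparator (saturate B {T}) S)
    (hTS : ¬T ⊆ S) : Parallel B T S := by
  obtain ⟨t₀, ht₀T, ht₀S⟩ := Set.not_subset.1 hTS
  have hD : ∀ t ∈ T, t ∉ S → t ∈ compOf (saturate B {T}) S t₀ := fun t ht htS => by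
    by_cases e : t = t₀
    · exact e ▸ mem_compOf_self htS
    · exact avoidReach_of_adj ⟨Ne.symm e, Or.inr ⟨T, rfl, ht₀T, ht⟩⟩ ht₀S htS
  obtain ⟨-, C₁, C₂, h12, hC₁, hC₂⟩ := isMinSeparator_iff.1 hS
  obtain ⟨C, ⟨hC, hCN⟩, hCT⟩ : ∃ C, IsFullComp (saturate B {T}) S C ∧ Disjoint C T := by
    have key : ∀ C, IsCompOf (saturate B {T}) S C → ¬Disjoint C T →
        C = compOf (saturate B {T}) S t₀ := fun C hC hCT => by
      obtain ⟨t, htC, htT⟩ := Set.not_disjoint_iff.1 hCT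
      exact hC.eq_of_mem (isCompOf_compOf ht₀S) htC (hD t htT (hC.notMem htC))
    by_cases h₁ : Disjoint C₁ T
    · exact ⟨C₁, hC₁, h₁⟩
    by_cases h₂ : Disjoint C₂ T
    · exact ⟨C₂, hC₂, h₂⟩
    exact absurd ((key _ hC₁.1 h₁).trans (key _ hC₂.1 h₂).symm) h12
  obtain ⟨c, hc⟩ := hC.1
  have hreach : AvoidReach (saturate B {T}) T = AvoidReach B T :=
    avoidReach_saturate fun T' hT' => Set.mem_singleton_iff.1 hT' ▸ parallel_self
  have hjoin : ∀ s ∈ S, s ∉ T → AvoidReach B T c s := fun s hs hsT => by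
    obtain ⟨-, w, hw, hws⟩ : s ∈ neighborsOf (saturate B {T}) C := hCN ▸ hs
    rw [← hreach]
    exact (hC.avoidReach_of_disjoint hCT hc hw).trans
      (avoidReach_of_adj hws (Set.disjoint_left.1 hCT hw) hsT)
  exact parallel_iff.2 fun s₁ h₁ s₂ h₂ h₁T h₂T => (hjoin s₁ h₁ h₁T).symm.trans (hjoin s₂ h₂ h₂T)

lemma IsMinSeparator.of_saturate_singleton (hT : IsMinSeparator B T)
    (hS : IsMinSeparator (saturate B {T}) S) : IsMinSeparator B S ∧ Parallel B S T := by
  have hpar : Parallel B S T := by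
    by_cases hTS : T ⊆ S
    · exact parallel_iff.2 fun t ht _ _ htS _ => absurd (hTS ht) htS
    · exact hT.parallel_symm (parallel_of_isMinSeparator_saturate hS hTS)
  have hreach : AvoidReach (saturate B {T}) S = AvoidReach B S :=
    avoidReach_saturate fun T' hT' => Set.mem_singleton_iff.1 hT' ▸ hpar
  refine ⟨hS.of_fullComp fun C ⟨hC, hN⟩ => ?_, hpar⟩
  have hCB : IsCompOf B S C := by rwa [← isCompOf_eq_of_avoidReach_eq hreach]
  refine ⟨hCB, hCB.neighborsOf_subset.antisymm fun s hs => ?_⟩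
  obtain ⟨hsC, c, hc, hcs⟩ : s ∈ neighborsOf (saturate B {T}) C := hN ▸ hs
  rcases hcs.2 with hB | ⟨T', hT', hcT, hsT⟩
  · exact ⟨hsC, c, hc, hB⟩
  rw [Set.mem_singleton_iff] at hT'
  subst hT'
  -- `c ∈ T \ S`, so `C` is the component of `B - S` containing `T \ S`
  obtain ⟨E, hE, hTE, hTN⟩ := hT.exists_comp_of_parallel
    (parallel_of_isMinSeparator_saturate hS fun h => hCB.notMem hc (h hcT))
  rw [hCB.eq_of_mem hE hc (hTE ⟨hcT, hCB.notMem hc⟩)]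
  exact hTN ⟨hsT, hs⟩

lemma isMinSeparator_of_saturate [Finite V] (hΦ : Φ ⊆ minSeps G) (hpw : Φ.Pairwise (Parallel G))
    (hS : IsMinSeparator (saturate G Φ) S) : IsMinSeparator G S ∧ ∀ T ∈ Φ, Parallel G S T := by
  induction Φ, Φ.toFinite using Set.Finite.induction_on generalizing S with
  | empty =>
    rw [saturate_empty] at hS
    exact ⟨hS, fun T hT => absurd hT (Set.notMem_empty T)⟩
  | @insert T Φ hTΦ _ ih =>
    have hTpar : ∀ T' ∈ Φ, Parallel G T T' := fun T' hT' =>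
      hpw (Set.mem_insert _ _) (Set.mem_insert_of_mem _ hT') fun h => hTΦ (h ▸ hT')
    rw [saturate_insert] at hS
    obtain ⟨hSΦ, hparT⟩ := IsMinSeparator.of_saturate_singleton
      ((hΦ (Set.mem_insert _ _)).saturate_of_parallel hTpar) hS
    obtain ⟨hSG, hparΦ⟩ := ih ((Set.subset_insert _ _).trans hΦ)
      (hpw.mono (Set.subset_insert _ _)) hSΦ
    refine ⟨hSG, Set.forall_mem_insert.2 ⟨?_, hparΦ⟩⟩
    rwa [← parallel_eq_of_avoidReach_eq (avoidReach_saturate hparΦ)]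

lemma MaxPairwiseParallel.minSeps_saturate [Finite V] (hΦ : MaxPairwiseParallel G Φ) :
    minSeps (saturate G Φ) = Φ := by
  obtain ⟨hsub, hpw, hmax⟩ := hΦ
  refine Set.Subset.antisymm (fun S hS => ?_) fun S hS =>
    (hsub hS).saturate_of_parallel fun T hT => parallel_of_pairwise hpw hS hT
  obtain ⟨hSG, hpar⟩ := isMinSeparator_of_saturate hsub hpw hS
  have := hmax (insert S Φ) (Set.insert_subset hSG hsub)
    (hpw.insert fun T hT _ => ⟨hpar T hT, hSG.parallel_symm (hpar T hT)⟩)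
    (Set.subset_insert _ _)
  exact this ▸ Set.mem_insert _ _

lemma MaxPairwiseParallel.isMinimalTriangulation [Finite V] (hΦ : MaxPairwiseParallel G Φ) :
    IsMinimalTriangulation G (saturate G Φ) := by
  have hch : IsChordal (saturate G Φ) := isChordal_of_forall_isClique fun S hS a ha b hb hab =>
    ⟨hab, Or.inr ⟨S, hΦ.minSeps_saturate ▸ hS, ha, hb⟩⟩
  refine ⟨⟨hch, le_saturate G Φ⟩, fun H ⟨hchH, hGH⟩ hle => le_antisymm hle ?_⟩
  rintro a b ⟨hab, hG | ⟨T, hT, ha, hb⟩⟩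
  · exact hGH hG
  -- `T` still separates in `H`, which lies between `G` and `saturate G Φ`
  have hreach := avoidReach_saturate fun T' hT' => parallel_of_pairwise hΦ.2.1 hT hT'
  have hTH : IsMinSeparator H T := IsMinSeparator.of_le hGH (hΦ.1 hT) <| by
    funext x y
    exact propext ⟨fun h => hreach ▸ h.mono hle, AvoidReach.mono hGH⟩
  exact hchH.isClique_of_isMinSeparator hTH ha hb hab

end Saturation

/-- If `H` is a minimal triangulation of `G` then `Δ(H)` is a
maximal pairwise-parallel set of minimal separators of `G` and `H = G_{Δ(H)}`;
conversely, for any maximal pairwise-parallel set `Φ` of minimal separators of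
`G`, `G_Φ` is a minimal triangulation of `G` with `Δ(G_Φ) = Φ`. -/
theorem minimal_triangulations_via_parallel_minimal_separators
    {V : Type} [Fintype V] (G : SimpleGraph V) :
    (∀ H : SimpleGraph V, IsMinimalTriangulation G H →
        MaxPairwiseParallel G (minSeps H) ∧ H = saturate G (minSeps H)) ∧
      (∀ Φ : Set (Set V), MaxPairwiseParallel G Φ →
        IsMinimalTriangulation G (saturate G Φ) ∧ minSeps (saturate G Φ) = Φ) :=
  ⟨fun _ hmt => ⟨hmt.maxPairwiseParallel, hmt.eq_saturate⟩,
    fun _ hΦ => ⟨hΦ.isMinimalTriangulation, hΦ.minSeps_saturate⟩⟩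

end PMCPP
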